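/- arXiv:2506.06112 — 3 statements merged into one kernel-verified Lean document; each statement's English description precedes it below -/
import Mathlib

section
/- Define g(p) = -log(-log(p)) + log(ε₁ - log(p + ε₂)) for p ∈ (0,1), where ε₁, ε₂ > 0 and e^{ε₁} > 1 + ε₂. Then g is strictly monotonically increasing on (0,1). Equivalently, the gap r(p) - r̃(p) between the GumbelMap r(p) = -log(-log(p)) and the Bounded GumbelMap r̃(p) = -log(ε₁ - log(p + ε₂)) increases monotonically in p. -/
/-!
The gap has derivative `1 / (p (-log p)) - 1 / ((p + ε₂) (ε₁ - log (p + ε₂)))`, so it suffices that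
`p (-log p) < (p + ε₂) (ε₁ - log (p + ε₂))` for every `p > 0`. By the two-term log-sum inequality
with weights `1` and `e^{ε₁} - 1`, the right side minus the left side is at least
`-ε₂ log (ε₂ / (e^{ε₁} - 1))`, which is positive precisely because `e^{ε₁} > 1 + ε₂`.
-/

open Real

lemma mul_log_add_sub_le_mul_log_div {x a q : ℝ} (hx : 0 < x) (ha : 0 < a) (hq : 0 < q) :
    x * log q + (x - a * q) ≤ x * log (x / a) := by
  have h := one_sub_inv_le_log_of_pos (show 0 < x / (a * q) by positivity)
  rw [log_div hx.ne' (by positivity), log_mul ha.ne' hq.ne', inv_div] at h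
  rw [log_div hx.ne' ha.ne']
  have : x * (1 - a * q / x) = x - a * q := by field_simp
  nlinarith

theorem add_mul_log_div_add_le {x y a b : ℝ} (hx : 0 < x) (hy : 0 < y) (ha : 0 < a)
    (hb : 0 < b) : (x + y) * log ((x + y) / (a + b)) ≤ x * log (x / a) + y * log (y / b) := by
  have hq : 0 < (x + y) / (a + b) := by positivity
  have hx' := mul_log_add_sub_le_mul_log_div hx ha hq
  have hy' := mul_log_add_sub_le_mul_log_div hy hb hq
  have : (a + b) * ((x + y) / (a + b)) = x + y := by field_simp
  nlinarith

theorem mul_neg_log_lt_add_mul_sub_log_add {ε₁ ε₂ y : ℝ} (hε₂ : 0 < ε₂)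
    (hadm : 1 + ε₂ < exp ε₁) (hy : 0 < y) :
    y * -log y < (y + ε₂) * (ε₁ - log (y + ε₂)) := by
  have hE : 0 < exp ε₁ - 1 := by linarith
  have hgibbs := add_mul_log_div_add_le hy hε₂ one_pos hE
  rw [add_sub_cancel, log_div (by positivity) (exp_pos ε₁).ne', log_exp, div_one] at hgibbs
  have ht : log (ε₂ / (exp ε₁ - 1)) < 0 :=
    log_neg (by positivity) ((div_lt_one hE).mpr (by linarith))
  nlinarith

theorem hasDerivAt_log_sub_log_add {c d x : ℝ} (hx : 0 < x + d) (hlt : log (x + d) < c) :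
    HasDerivAt (fun p => log (c - log (p + d))) (-((x + d) * (c - log (x + d)))⁻¹) x := by
  have h := ((((hasDerivAt_id' x).add_const d).log hx.ne').const_sub c).log
    (sub_ne_zero.mpr hlt.ne')
  rwa [neg_div, one_div, div_eq_mul_inv, ← mul_inv] at h

theorem gap_strict_mono_general (ε₁ ε₂ : ℝ) (hε₂ : 0 < ε₂)
    (hadm : Real.exp ε₁ > 1 + ε₂) :
    StrictMonoOn (fun p : ℝ => -Real.log (-Real.log p) + Real.log (ε₁ - Real.log (p + ε₂)))
      (Set.Ioo 0 1) := by
  have hderiv : ∀ x ∈ Set.Ioo (0 : ℝ) 1, HasDerivAt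
      (fun p : ℝ => -Real.log (-Real.log p) + Real.log (ε₁ - Real.log (p + ε₂)))
      ((x * -log x)⁻¹ - ((x + ε₂) * (ε₁ - log (x + ε₂)))⁻¹) x := by
    rintro x ⟨hx0, hx1⟩
    have hlog : log (x + ε₂) < ε₁ := (log_lt_iff_lt_exp (by positivity)).mpr (by linarith)
    have hr := hasDerivAt_log_sub_log_add (c := 0) (d := 0) (by simpa using hx0)
      (by simpa using log_neg hx0 hx1)
    simp only [zero_sub, add_zero] at hr
    exact (hr.fun_neg.fun_add (hasDerivAt_log_sub_log_add (by positivity) hlog)).congr_deriv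
      (by ring)
  refine strictMonoOn_of_deriv_pos (convex_Ioo 0 1)
    (fun x hx => (hderiv x hx).continuousAt.continuousWithinAt) fun x hx => ?_
  rw [interior_Ioo] at hx
  rw [(hderiv x hx).deriv]
  obtain ⟨hx0, hx1⟩ := hx
  have hpos : 0 < x * -log x := mul_pos hx0 (neg_pos.mpr (log_neg hx0 hx1))
  exact sub_pos.mpr (inv_strictAnti₀ hpos (mul_neg_log_lt_add_mul_sub_log_add hε₂ hadm hx0))

theorem gap_strict_mono (ε₁ ε₂ : ℝ) (hε₁ : 0 < ε₁) (hε₂ : 0 < ε₂)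
    (hadm : Real.exp ε₁ > 1 + ε₂) :
    StrictMonoOn (fun p : ℝ => -Real.log (-Real.log p) + Real.log (ε₁ - Real.log (p + ε₂)))
      (Set.Ioo 0 1) :=
  gap_strict_mono_general ε₁ ε₂ hε₂ hadm
end

section
/- Let ε₁, ε₂ > 0 with e^{ε₁} > 1 + ε₂, define A(p) = (p + ε₂)(ε₁ - log(p + ε₂)) + p·log(p), and let p* = ε₂/(e^{ε₁} - 1). Then A(p*) = ε₂ · log((e^{ε₁} - 1)/ε₂) > 0. -/
open Real

theorem A_at_critical_point (ε₁ ε₂ : ℝ) (hε₁ : 0 < ε₁) (hε₂ : 0 < ε₂)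
    (hadm : Real.exp ε₁ > 1 + ε₂) :
    (ε₂ / (Real.exp ε₁ - 1) + ε₂) * (ε₁ - Real.log (ε₂ / (Real.exp ε₁ - 1) + ε₂))
        + (ε₂ / (Real.exp ε₁ - 1)) * Real.log (ε₂ / (Real.exp ε₁ - 1))
      = ε₂ * Real.log ((Real.exp ε₁ - 1) / ε₂) ∧
    0 < ε₂ * Real.log ((Real.exp ε₁ - 1) / ε₂) := by
  have hE : 0 < Real.exp ε₁ - 1 := by nlinarith
  have hEne : Real.exp ε₁ - 1 ≠ 0 := ne_of_gt hE
  have h1 : ε₂ / (Real.exp ε₁ - 1) + ε₂ = ε₂ * Real.exp ε₁ / (Real.exp ε₁ - 1) := by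
    field_simp; ring
  have hlog1 : Real.log (ε₂ / (Real.exp ε₁ - 1) + ε₂)
      = Real.log ε₂ + ε₁ - Real.log (Real.exp ε₁ - 1) := by
    rw [h1, Real.log_div (by positivity) hEne,
      Real.log_mul (ne_of_gt hε₂) (Real.exp_ne_zero _), Real.log_exp]
  have hlog2 : Real.log (ε₂ / (Real.exp ε₁ - 1))
      = Real.log ε₂ - Real.log (Real.exp ε₁ - 1) := by
    rw [Real.log_div (ne_of_gt hε₂) hEne]
  have hlog3 : Real.log ((Real.exp ε₁ - 1) / ε₂)
      = Real.log (Real.exp ε₁ - 1) - Real.log ε₂ := by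
    rw [Real.log_div hEne (ne_of_gt hε₂)]
  constructor
  · rw [hlog1, h1, hlog2, hlog3]
    field_simp
    ring
  · have h4 : 1 < (Real.exp ε₁ - 1) / ε₂ := (one_lt_div hε₂).2 (by linarith)
    exact mul_pos hε₂ (Real.log_pos h4)
end

section
/- Let ε₁, ε₂ > 0 with e^{ε₁} > 1 + ε₂, and A(p) = (p + ε₂)(ε₁ - log(p + ε₂)) + p·log(p). Then A(p) > 0 for all p ∈ (0,1). -/
/-!
By the log-sum inequality applied to the pairs `(p, ε₂)` and `(1, e^{ε₁} - 1)`,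
`p log p + ε₂ log (ε₂ / (e^{ε₁} - 1)) ≥ (p + ε₂) (log (p + ε₂) - ε₁)`,
so `A(p) ≥ ε₂ log ((e^{ε₁} - 1) / ε₂)`, the value of `A` at its minimiser `ε₂ / (e^{ε₁} - 1)`,
which is positive because `e^{ε₁} - 1 > ε₂`.
-/

open Real

namespace Real

lemma sub_le_mul_log_div {x y : ℝ} (hx : 0 < x) (hy : 0 < y) : x - y ≤ x * log (x / y) := by
  have h := one_sub_inv_le_log_of_pos (div_pos hx hy)
  rw [inv_div] at h
  calc x - y = x * (1 - y / x) := by field_simp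
    _ ≤ x * log (x / y) := mul_le_mul_of_nonneg_left h hx.le

lemma add_mul_log_add_div_add_le {x₁ x₂ y₁ y₂ : ℝ} (hx₁ : 0 < x₁) (hx₂ : 0 < x₂)
    (hy₁ : 0 < y₁) (hy₂ : 0 < y₂) :
    (x₁ + x₂) * log ((x₁ + x₂) / (y₁ + y₂)) ≤ x₁ * log (x₁ / y₁) + x₂ * log (x₂ / y₂) := by
  set r := (x₁ + x₂) / (y₁ + y₂) with hr
  have hr_pos : 0 < r := by positivity
  have rescale : ∀ {x y : ℝ}, 0 < x → 0 < y →
      x - y * r ≤ x * log (x / y) - x * log r := fun {x y} hx hy => by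
    have h := sub_le_mul_log_div hx (mul_pos hy hr_pos)
    rwa [← div_div, log_div (div_pos hx hy).ne' hr_pos.ne', mul_sub] at h
  have h₁ := rescale hx₁ hy₁
  have h₂ := rescale hx₂ hy₂
  have hmass : y₁ * r + y₂ * r = x₁ + x₂ := by rw [hr]; field_simp
  linarith

end Real

theorem A_pos_general (ε₁ ε₂ : ℝ) (hε₂ : 0 < ε₂)
    (hadm : Real.exp ε₁ > 1 + ε₂) (p : ℝ) (hp0 : 0 < p) :
    0 < (p + ε₂) * (ε₁ - Real.log (p + ε₂)) + p * Real.log p := by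
  have hc : 0 < Real.exp ε₁ - 1 := by linarith
  have hlogsum := add_mul_log_add_div_add_le hp0 hε₂ one_pos hc
  rw [add_sub_cancel, div_one, log_div (by positivity) (exp_pos ε₁).ne', log_exp] at hlogsum
  have hmin : ε₂ * log (ε₂ / (Real.exp ε₁ - 1)) < 0 :=
    mul_neg_of_pos_of_neg hε₂ (log_neg (by positivity) ((div_lt_one hc).2 (by linarith)))
  linarith

theorem A_pos (ε₁ ε₂ : ℝ) (hε₁ : 0 < ε₁) (hε₂ : 0 < ε₂)
    (hadm : Real.exp ε₁ > 1 + ε₂) (p : ℝ) (hp0 : 0 < p) (hp1 : p < 1) :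
    0 < (p + ε₂) * (ε₁ - Real.log (p + ε₂)) + p * Real.log p :=
  A_pos_general ε₁ ε₂ hε₂ hadm p hp0
end
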